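/- If in chunk C, itemset I satisfies s(I, C) = min_{y ∈ I} s({y}, C) = s({y0}, C) for some y0 ∈ I (the cover condition), then for every itemset J with y0 ∈ J ⊆ items(C), s(J ∪ I, C) = s(J, C) restricted to records containing y0; in particular s({y0} ∪ I, C) = s({y0}, C). -/
import Mathlib


/-- Support: number of records in `T` containing the itemset `I`. -/
def supp (I : Finset ℕ) (T : Multiset (Finset ℕ)) : ℕ :=
  (T.filter (fun r => I ⊆ r)).card

/-- `k^m`-anonymity: every itemset of size at most `m` contained in at least
one record has support at least `k`. -/
def kmAnon (T : Multiset (Finset ℕ)) (k m : ℕ) : Prop :=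
  ∀ I : Finset ℕ, I.card ≤ m → (∃ r ∈ T, I ⊆ r) → k ≤ supp I T
theorem cover_condition_support_eq (C : Multiset (Finset ℕ)) (I : Finset ℕ)
    (y0 : ℕ) (hne : I.Nonempty) (hy0 : y0 ∈ I)
    (hmin : ∀ y ∈ I, supp {y0} C ≤ supp {y} C)
    (hcov : supp I C = supp {y0} C) :
    (∀ J : Finset ℕ, y0 ∈ J → supp (J ∪ I) C = supp J C) ∧
      supp ({y0} ∪ I) C = supp {y0} C := by
  have hle : C.filter (fun r => I ⊆ r) ≤ C.filter (fun r => ({y0} : Finset ℕ) ⊆ r) := by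
    rw [Multiset.le_filter]
    constructor
    · exact Multiset.filter_le _ _
    · intro r hr
      simp only [Multiset.mem_filter] at hr
      simpa using hr.2 hy0
  have heq : C.filter (fun r => I ⊆ r) = C.filter (fun r => ({y0} : Finset ℕ) ⊆ r) :=
    Multiset.eq_of_le_of_card_le hle (le_of_eq hcov.symm)
  have key : ∀ r ∈ C, y0 ∈ r → I ⊆ r := by
    intro r hrC hy0r
    have : r ∈ C.filter (fun r => I ⊆ r) := by
      rw [heq, Multiset.mem_filter]
      exact ⟨hrC, by simpa using hy0r⟩
    exact (Multiset.mem_filter.mp this).2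
  have main : ∀ J : Finset ℕ, y0 ∈ J → supp (J ∪ I) C = supp J C := by
    intro J hy0J
    unfold supp
    congr 1
    apply Multiset.filter_congr
    intro r hrC
    simp only [Finset.union_subset_iff]
    constructor
    · rintro ⟨h1, _⟩; exact h1
    · intro h; exact ⟨h, key r hrC (h hy0J)⟩
  refine ⟨main, ?_⟩
  have := main {y0} (Finset.mem_singleton_self y0)
  exact this
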